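/- (Reality of eigenvalues on (a,b).) Let a, b ∈ I with a ≤ s0 ≤ b, let r : I → ℝ be continuous on [a,b], and let a1, a2, b1, b2 be real numbers with |a1| + |a2| ≠ 0 and |b1| + |b2| ≠ 0. Suppose λ0 ∈ ℂ and y0 : I → ℂ belongs to L²_β(a,b), is continuous and differentiable at s0, has D_β y0 differentiable at s0 and D_β y0, D_{β^{-1}}D_β y0 bounded on {β^k(a), β^k(b) : k ∈ ℕ₀} ∪ {s0}, satisfies ℓ_β y0(t) = λ0·y0(t) for all t in {β^k(a), β^k(b) : k ∈ ℕ₀} ∪ {s0}, satisfies the boundary conditions a1·y0(a) + a2·(D_{β^{-1}}y0)(a) = 0 and b1·y0(b) + b2·(D_{β^{-1}}y0)(b) = 0, and has ∫_{a}^{b} |y0|² d_β > 0. Then λ0 is real. -/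
import Mathlib


open Function Set ComplexConjugate

/-- The β-derivative `D_β f` of `f : ℝ → ℂ`:
`(f (β t) - f t) / (β t - t)` for `t ≠ s0`, and `f' s0` at `t = s0`. -/
noncomputable def Dq (β : ℝ → ℝ) (s0 : ℝ) (f : ℝ → ℂ) (t : ℝ) : ℂ :=
  if t = s0 then deriv f s0 else (f (β t) - f t) / ((β t : ℂ) - (t : ℂ))

/-- The β-integral `∫_{s0}^{x} f d_β = ∑_{k} (β^k x - β^{k+1} x) f (β^k x)` (complex-valued). -/
noncomputable def betaInt (β : ℝ → ℝ) (x : ℝ) (f : ℝ → ℂ) : ℂ :=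
  ∑' k : ℕ, ((β^[k] x - β^[k + 1] x : ℝ) : ℂ) * f (β^[k] x)

/-- The β-integral `∫_{s0}^{x} f d_β` for a real-valued integrand. -/
noncomputable def betaIntR (β : ℝ → ℝ) (x : ℝ) (f : ℝ → ℝ) : ℝ :=
  ∑' k : ℕ, (β^[k] x - β^[k + 1] x) * f (β^[k] x)

/-- `∫_a^b f d_β := ∫_{s0}^b f d_β - ∫_{s0}^a f d_β`. -/
noncomputable def betaIntAB (β : ℝ → ℝ) (a b : ℝ) (f : ℝ → ℂ) : ℂ :=
  betaInt β b f - betaInt β a f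

/-- `∫_a^b f d_β` for a real-valued integrand. -/
noncomputable def betaIntRAB (β : ℝ → ℝ) (a b : ℝ) (f : ℝ → ℝ) : ℝ :=
  betaIntR β b f - betaIntR β a f

/-- `D_β β⁻¹`, viewed as a complex-valued function. -/
noncomputable def DbinvC (β βinv : ℝ → ℝ) (s0 : ℝ) : ℝ → ℂ :=
  Dq β s0 fun u => (βinv u : ℂ)

/-- The β-Sturm–Liouville operator
`ℓ_β y (t) = -(D_β β⁻¹)(t) · (D_{β⁻¹} (D_β y))(t) + r t · y t`. -/
noncomputable def ellBeta (β βinv : ℝ → ℝ) (s0 : ℝ) (r : ℝ → ℝ) (y : ℝ → ℂ) (t : ℝ) : ℂ :=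
  -(DbinvC β βinv s0 t) * Dq βinv s0 (Dq β s0 y) t + (r t : ℂ) * y t

/-- The β-Wronskian `[y,z](t) = y t · (D_{β⁻¹} z) t - z t · (D_{β⁻¹} y) t`. -/
noncomputable def wronk (βinv : ℝ → ℝ) (s0 : ℝ) (y z : ℝ → ℂ) (t : ℝ) : ℂ :=
  y t * Dq βinv s0 z t - z t * Dq βinv s0 y t

/-- The β-exponential `e_{p,β}(t) = 1 / ∏_k (1 - p(β^k t)(β^k t - β^{k+1} t))`. -/
noncomputable def ebeta (β : ℝ → ℝ) (p : ℝ → ℂ) (t : ℝ) : ℂ :=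
  1 / ∏' k : ℕ, (1 - p (β^[k] t) * ((β^[k] t - β^[k + 1] t : ℝ) : ℂ))

/-- The β-exponential `E_{p,β}(t) = ∏_k (1 + p(β^k t)(β^k t - β^{k+1} t))`. -/
noncomputable def Ebeta (β : ℝ → ℝ) (p : ℝ → ℂ) (t : ℝ) : ℂ :=
  ∏' k : ℕ, (1 + p (β^[k] t) * ((β^[k] t - β^[k + 1] t : ℝ) : ℂ))

/-- `sin_{p,β}(t) = (e_{ip,β}(t) - e_{-ip,β}(t)) / (2i)`. -/
noncomputable def sinBeta (β : ℝ → ℝ) (p : ℝ → ℂ) (t : ℝ) : ℂ :=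
  (ebeta β (fun s => Complex.I * p s) t - ebeta β (fun s => -(Complex.I * p s)) t) /
    (2 * Complex.I)

/-- `cos_{p,β}(t) = (e_{ip,β}(t) + e_{-ip,β}(t)) / 2`. -/
noncomputable def cosBeta (β : ℝ → ℝ) (p : ℝ → ℂ) (t : ℝ) : ℂ :=
  (ebeta β (fun s => Complex.I * p s) t + ebeta β (fun s => -(Complex.I * p s)) t) / 2


/-! ### Auxiliary lemmas -/

section Aux

open Filter Topology

/-- Conjugation commutes with the β-derivative. -/
lemma Dq_conj (β : ℝ → ℝ) (s0 : ℝ) (y : ℝ → ℂ) (t : ℝ) :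
    Dq β s0 (fun u => conj (y u)) t = conj (Dq β s0 y t) := by
  unfold Dq
  by_cases ht : t = s0
  · simp only [if_pos ht]
    simpa only [starRingEnd_apply] using (deriv.star (f := y) (x := s0))
  · simp only [if_neg ht, map_div₀, map_sub, Complex.conj_ofReal]

/-- At a point `β u` with `u ≠ s0`, the `β⁻¹`-derivative equals the `β`-derivative at `u`. -/
lemma Dq_shift (β βinv : ℝ → ℝ) (s0 : ℝ) (f : ℝ → ℂ) (u : ℝ)
    (hu : u ≠ s0) (hβu : β u ≠ s0) (hinvβ : βinv (β u) = u) :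
    Dq βinv s0 f (β u) = Dq β s0 f u := by
  unfold Dq
  rw [if_neg hβu, if_neg hu, hinvβ]
  rw [show f u - f (β u) = -(f (β u) - f u) by ring,
    show ((u : ℂ) - (β u : ℂ)) = -(((β u : ℝ) : ℂ) - (u : ℂ)) by ring, neg_div_neg_eq]

/-- Conjugation commutes with the β-Sturm–Liouville operator (away from `s0`). -/
lemma ellBeta_conj (β βinv : ℝ → ℝ) (s0 : ℝ) (r : ℝ → ℝ) (y : ℝ → ℂ) (t : ℝ)
    (ht : t ≠ s0) (hinvt : βinv t ≠ s0) :
    ellBeta β βinv s0 r (fun u => conj (y u)) t = conj (ellBeta β βinv s0 r y t) := by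
  simp only [ellBeta, DbinvC, Dq, if_neg ht, if_neg hinvt]
  simp only [map_add, map_mul, map_neg, map_div₀, map_sub, Complex.conj_ofReal]

/-- The discrete Lagrange identity at a single point. -/
lemma lagrange_step (β βinv : ℝ → ℝ) (s0 : ℝ) (r : ℝ → ℝ) (y z : ℝ → ℂ) (t : ℝ)
    (hts : t ≠ s0) (hinvts : βinv t ≠ s0)
    (hβ : β (βinv t) = t) (hβinvβ : βinv (β t) = t)
    (hne1 : β t ≠ t) (hne2 : βinv t ≠ t) :
    ((t - β t : ℝ) : ℂ) * (ellBeta β βinv s0 r y t * z t - y t * ellBeta β βinv s0 r z t)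
      = (Dq β s0 y t * z (β t) - Dq β s0 z t * y (β t))
        - (Dq βinv s0 y t * z t - Dq βinv s0 z t * y t) := by
  have hδ : ((β t : ℝ) : ℂ) - (t : ℂ) ≠ 0 := by
    rw [sub_ne_zero]; exact_mod_cast hne1
  have hα : ((βinv t : ℝ) : ℂ) - (t : ℂ) ≠ 0 := by
    rw [sub_ne_zero]; exact_mod_cast hne2
  have hα' : (t : ℂ) - ((βinv t : ℝ) : ℂ) ≠ 0 := by
    rw [sub_ne_zero]; exact_mod_cast (Ne.symm hne2)
  simp only [ellBeta, DbinvC, Dq, if_neg hts, if_neg hinvts]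
  rw [hβ, hβinvβ]
  push_cast
  field_simp
  ring

/-- Convergence of the iterates of `β` to the fixed point. -/
lemma tendsto_iterate (I : Set ℝ) (hIconn : I.OrdConnected)
    (β : ℝ → ℝ) (s0 : ℝ)
    (hmono : StrictMonoOn β I) (hcont : ContinuousOn β I)
    (hs0I : s0 ∈ I) (hfix : β s0 = s0)
    (hsign : ∀ t ∈ I, (t - s0) * (β t - t) ≤ 0)
    (huniq : ∀ t ∈ I, (t - s0) * (β t - t) = 0 → t = s0)
    (x : ℝ) (hx : x ∈ I) :
    Filter.Tendsto (fun k => β^[k] x) Filter.atTop (nhds s0) := by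
  rcases le_total s0 x with hsx | hxs
  · -- case s0 ≤ x : decreasing iterates
    have hsub : Set.Icc s0 x ⊆ I := hIconn.out hs0I hx
    have hstep : ∀ t ∈ Set.Icc s0 x, β t ∈ Set.Icc s0 t := by
      rintro t ⟨h1, h2⟩
      have htI : t ∈ I := hsub ⟨h1, h2⟩
      constructor
      · have := hmono.monotoneOn hs0I htI h1
        rwa [hfix] at this
      · rcases eq_or_lt_of_le h1 with h | h
        · rw [← h, hfix]
        · nlinarith [hsign t htI]
    have hmem : ∀ k, β^[k] x ∈ Set.Icc s0 x := by
      intro k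
      induction k with
      | zero => simpa using hsx
      | succ k ih =>
        rw [Function.iterate_succ_apply']
        exact ⟨(hstep _ ih).1, le_trans (hstep _ ih).2 ih.2⟩
    have hanti : Antitone (fun k => β^[k] x) := by
      apply antitone_nat_of_succ_le
      intro k
      rw [Function.iterate_succ_apply']
      exact (hstep _ (hmem k)).2
    have hbdd : BddBelow (Set.range fun k => β^[k] x) := by
      refine ⟨s0, ?_⟩
      rintro _ ⟨k, rfl⟩
      exact (hmem k).1
    have hlim := tendsto_atTop_ciInf hanti hbdd
    set L := ⨅ k, β^[k] x with hL
    have hLmem : L ∈ Set.Icc s0 x := by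
      constructor
      · exact le_ciInf fun k => (hmem k).1
      · exact le_trans (ciInf_le hbdd 0) (by simpa using (hmem 0).2)
    have hLI : L ∈ I := hsub hLmem
    have h1 : Filter.Tendsto (fun k => β^[k + 1] x) Filter.atTop (nhds L) :=
      (Filter.tendsto_add_atTop_iff_nat 1).mpr hlim
    have h2 : Filter.Tendsto (fun k => β (β^[k] x)) Filter.atTop (nhds (β L)) := by
      refine ((hcont L hLI).tendsto).comp ?_
      rw [tendsto_nhdsWithin_iff]
      exact ⟨hlim, Filter.Eventually.of_forall fun k => hsub (hmem k)⟩
    have hfixL : β L = L := by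
      refine tendsto_nhds_unique ?_ h1
      simpa only [← Function.iterate_succ_apply'] using h2
    have : L = s0 := huniq L hLI (by rw [hfixL]; ring)
    rwa [this] at hlim
  · -- case x ≤ s0 : increasing iterates
    have hsub : Set.Icc x s0 ⊆ I := hIconn.out hx hs0I
    have hstep : ∀ t ∈ Set.Icc x s0, β t ∈ Set.Icc t s0 := by
      rintro t ⟨h1, h2⟩
      have htI : t ∈ I := hsub ⟨h1, h2⟩
      constructor
      · rcases eq_or_lt_of_le h2 with h | h
        · rw [h, hfix]
        · nlinarith [hsign t htI]
      · have := hmono.monotoneOn htI hs0I h2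
        rwa [hfix] at this
    have hmem : ∀ k, β^[k] x ∈ Set.Icc x s0 := by
      intro k
      induction k with
      | zero => simpa using hxs
      | succ k ih =>
        rw [Function.iterate_succ_apply']
        exact ⟨le_trans ih.1 (hstep _ ih).1, (hstep _ ih).2⟩
    have hmono' : Monotone (fun k => β^[k] x) := by
      apply monotone_nat_of_le_succ
      intro k
      rw [Function.iterate_succ_apply']
      exact (hstep _ (hmem k)).1
    have hbdd : BddAbove (Set.range fun k => β^[k] x) := by
      refine ⟨s0, ?_⟩
      rintro _ ⟨k, rfl⟩
      exact (hmem k).2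
    have hlim := tendsto_atTop_ciSup hmono' hbdd
    set L := ⨆ k, β^[k] x with hL
    have hLmem : L ∈ Set.Icc x s0 := by
      constructor
      · exact le_trans (by simpa using (hmem 0).1) (le_ciSup hbdd 0)
      · exact ciSup_le fun k => (hmem k).2
    have hLI : L ∈ I := hsub hLmem
    have h1 : Filter.Tendsto (fun k => β^[k + 1] x) Filter.atTop (nhds L) :=
      (Filter.tendsto_add_atTop_iff_nat 1).mpr hlim
    have h2 : Filter.Tendsto (fun k => β (β^[k] x)) Filter.atTop (nhds (β L)) := by
      refine ((hcont L hLI).tendsto).comp ?_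
      rw [tendsto_nhdsWithin_iff]
      exact ⟨hlim, Filter.Eventually.of_forall fun k => hsub (hmem k)⟩
    have hfixL : β L = L := by
      refine tendsto_nhds_unique ?_ h1
      simpa only [← Function.iterate_succ_apply'] using h2
    have : L = s0 := huniq L hLI (by rw [hfixL]; ring)
    rwa [this] at hlim

/-- Green's formula at one endpoint. -/
lemma green_endpoint (I : Set ℝ) (hIconn : I.OrdConnected)
    (β βinv : ℝ → ℝ) (s0 : ℝ)
    (hmono : StrictMonoOn β I) (hcont : ContinuousOn β I)
    (hbij : Set.BijOn β I I) (hinv : Set.InvOn βinv β I I)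
    (hs0I : s0 ∈ I) (hfix : β s0 = s0)
    (hsign : ∀ t ∈ I, (t - s0) * (β t - t) ≤ 0)
    (huniq : ∀ t ∈ I, (t - s0) * (β t - t) = 0 → t = s0)
    (r : ℝ → ℝ) (lam0 : ℂ) (y0 : ℝ → ℂ)
    (x : ℝ) (hx : x ∈ I)
    (hL2 : Summable fun j : ℕ => (β^[j] x - β^[j + 1] x) * ‖y0 (β^[j] x)‖ ^ 2)
    (hy0c : ContinuousAt y0 s0)
    (hDy0d : DifferentiableAt ℝ (Dq β s0 y0) s0)
    (heig : ∀ k : ℕ, ellBeta β βinv s0 r y0 (β^[k] x) = lam0 * y0 (β^[k] x)) :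
    (lam0 - conj lam0) * ((betaIntR β x fun t => ‖y0 t‖ ^ 2 : ℝ) : ℂ)
      = (Dq β s0 y0 s0 * conj (y0 s0) - conj (Dq β s0 y0 s0) * y0 s0)
        + wronk βinv s0 y0 (fun u => conj (y0 u)) x := by
  classical
  set z : ℝ → ℂ := fun u => conj (y0 u) with hz
  by_cases hxs : x = s0
  · subst hxs
    have h0 : betaIntR β x (fun t => ‖y0 t‖ ^ 2) = 0 := by
      unfold betaIntR
      simp [Function.iterate_fixed hfix]
    rw [h0]
    have hDz : Dq βinv x z x = conj (Dq βinv x y0 x) := Dq_conj βinv x y0 x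
    have hDy : Dq βinv x y0 x = Dq β x y0 x := by unfold Dq; rw [if_pos rfl, if_pos rfl]
    unfold wronk
    rw [hDz, hDy]
    simp only [hz]
    push_cast
    ring
  · -- main case
    set p : ℕ → ℝ := fun k => β^[k] x with hp
    have hmem : ∀ k, p k ∈ I := by
      intro k
      induction k with
      | zero => simpa [hp] using hx
      | succ k ih =>
        show β^[k + 1] x ∈ I
        rw [Function.iterate_succ_apply']
        exact hbij.mapsTo ih
    have hne : ∀ k, p k ≠ s0 := by
      intro k
      induction k with
      | zero => simpa [hp] using hxs
      | succ k ih =>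
        show β^[k + 1] x ≠ s0
        rw [Function.iterate_succ_apply']
        intro hcontra
        exact ih (hmono.injOn (hmem k) hs0I (by rw [hcontra, hfix]))
    have hβp : ∀ k, β (p k) = p (k + 1) := fun k => (Function.iterate_succ_apply' β k x).symm
    have hβne : ∀ k, β (p k) ≠ p k := by
      intro k h
      exact hne k (huniq (p k) (hmem k) (by rw [h]; ring))
    have hβinvβ : ∀ k, βinv (β (p k)) = p k := fun k => hinv.1 (hmem k)
    have hβinvmem : ∀ u ∈ I, βinv u ∈ I ∧ β (βinv u) = u := by
      intro u hu
      obtain ⟨w, hw, rfl⟩ := hbij.surjOn hu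
      rw [hinv.1 hw]
      exact ⟨hw, rfl⟩
    have hββinv : ∀ k, β (βinv (p k)) = p k := fun k => (hβinvmem (p k) (hmem k)).2
    have hinvne : ∀ k, βinv (p k) ≠ s0 := by
      intro k h
      apply hne k
      rw [← hββinv k, h, hfix]
    have hinvne' : ∀ k, βinv (p k) ≠ p k := by
      intro k h
      apply hβne k
      conv_lhs => rw [← h]
      rw [hββinv k]
    -- the two sequences
    set h : ℕ → ℂ := fun k => Dq βinv s0 y0 (p k) * z (p k) - Dq βinv s0 z (p k) * y0 (p k)
      with hhdef
    set A : ℕ → ℂ := fun k => ((p k - p (k + 1) : ℝ) : ℂ) *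
      (ellBeta β βinv s0 r y0 (p k) * z (p k) - y0 (p k) * ellBeta β βinv s0 r z (p k)) with hA
    have hshift : ∀ (f : ℝ → ℂ) k, Dq βinv s0 f (p (k + 1)) = Dq β s0 f (p k) := by
      intro f k
      rw [← hβp k]
      exact Dq_shift β βinv s0 f (p k) (hne k) (hβp k ▸ hne (k + 1)) (hβinvβ k)
    have hstep : ∀ k, A k = h (k + 1) - h k := by
      intro k
      have hls := lagrange_step β βinv s0 r y0 z (p k) (hne k) (hinvne k)
        (hββinv k) (hβinvβ k) (hβne k) (hinvne' k)
      rw [hβp k] at hls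
      have e1 : Dq β s0 y0 (p k) = Dq βinv s0 y0 (p (k + 1)) := (hshift y0 k).symm
      have e2 : Dq β s0 z (p k) = Dq βinv s0 z (p (k + 1)) := (hshift z k).symm
      rw [e1, e2] at hls
      simpa [hA, hhdef] using hls
    have hAval : ∀ k, A k = (lam0 - conj lam0) * (((p k - p (k + 1)) * ‖y0 (p k)‖ ^ 2 : ℝ) : ℂ) := by
      intro k
      have h1 : ellBeta β βinv s0 r y0 (p k) = lam0 * y0 (p k) := heig k
      have h2 : ellBeta β βinv s0 r z (p k) = conj lam0 * z (p k) := by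
        have := ellBeta_conj β βinv s0 r y0 (p k) (hne k) (hinvne k)
        rw [hz]
        rw [this, h1, map_mul]
      have h3 : y0 (p k) * z (p k) = ((‖y0 (p k)‖ ^ 2 : ℝ) : ℂ) := by
        simp only [hz]
        push_cast
        exact Complex.mul_conj' (y0 (p k))
      rw [hA]
      simp only [h1, h2]
      push_cast
      rw [show lam0 * y0 (p k) * z (p k) - y0 (p k) * (conj lam0 * z (p k))
          = (lam0 - conj lam0) * (y0 (p k) * z (p k)) by ring, h3]
      push_cast
      ring
    -- summability and tsum value
    have hsummC : Summable fun k => (((p k - p (k + 1)) * ‖y0 (p k)‖ ^ 2 : ℝ) : ℂ) :=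
      Complex.summable_ofReal.mpr hL2
    have hsummA : Summable A := by
      have := hsummC.mul_left (lam0 - conj lam0)
      exact this.congr fun k => (hAval k).symm
    have htsum : ∑' k, A k = (lam0 - conj lam0) * ((betaIntR β x fun t => ‖y0 t‖ ^ 2 : ℝ) : ℂ) := by
      calc ∑' k, A k
          = ∑' k, (lam0 - conj lam0) * (((p k - p (k + 1)) * ‖y0 (p k)‖ ^ 2 : ℝ) : ℂ) :=
            tsum_congr hAval
        _ = (lam0 - conj lam0) * ∑' k, (((p k - p (k + 1)) * ‖y0 (p k)‖ ^ 2 : ℝ) : ℂ) :=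
            tsum_mul_left
        _ = (lam0 - conj lam0) * ((betaIntR β x fun t => ‖y0 t‖ ^ 2 : ℝ) : ℂ) := by
            rw [← Complex.ofReal_tsum]
            rfl
    -- partial sums telescope
    have hps : ∀ N, ∑ k ∈ Finset.range N, A k = h N - h 0 := by
      intro N
      rw [Finset.sum_congr rfl fun k _ => hstep k]
      exact Finset.sum_range_sub h N
    -- limits
    have hplim : Filter.Tendsto p Filter.atTop (nhds s0) :=
      tendsto_iterate I hIconn β s0 hmono hcont hs0I hfix hsign huniq x hx
    have hdlim : Filter.Tendsto (fun k => Dq β s0 y0 (p k)) Filter.atTop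
        (nhds (Dq β s0 y0 s0)) := hDy0d.continuousAt.tendsto.comp hplim
    have hylim : Filter.Tendsto (fun k => y0 (p k)) Filter.atTop (nhds (y0 s0)) :=
      hy0c.tendsto.comp hplim
    have hylim' : Filter.Tendsto (fun k => y0 (p (k + 1))) Filter.atTop (nhds (y0 s0)) :=
      (Filter.tendsto_add_atTop_iff_nat 1).mpr hylim
    have hconjc : Continuous (starRingEnd ℂ) := Complex.continuous_conj
    have hh1form : ∀ k, h (k + 1) = Dq β s0 y0 (p k) * conj (y0 (p (k + 1)))
        - conj (Dq β s0 y0 (p k)) * y0 (p (k + 1)) := by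
      intro k
      rw [hhdef]
      simp only
      rw [hshift y0 k, hshift z k, hz]
      have : Dq β s0 (fun u => conj (y0 u)) (p k) = conj (Dq β s0 y0 (p k)) :=
        Dq_conj β s0 y0 (p k)
      rw [this]
    set W0 : ℂ := Dq β s0 y0 s0 * conj (y0 s0) - conj (Dq β s0 y0 s0) * y0 s0 with hW0
    have hh1 : Filter.Tendsto (fun k => h (k + 1)) Filter.atTop (nhds W0) := by
      have l1 : Filter.Tendsto (fun k => conj (y0 (p (k + 1)))) Filter.atTop
          (nhds (conj (y0 s0))) := (hconjc.tendsto _).comp hylim'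
      have l2 : Filter.Tendsto (fun k => conj (Dq β s0 y0 (p k))) Filter.atTop
          (nhds (conj (Dq β s0 y0 s0))) := (hconjc.tendsto _).comp hdlim
      have := (hdlim.mul l1).sub (l2.mul hylim')
      refine this.congr fun k => (hh1form k).symm
    have hh : Filter.Tendsto h Filter.atTop (nhds W0) :=
      (Filter.tendsto_add_atTop_iff_nat 1).mp hh1
    have hpslim : Filter.Tendsto (fun N => ∑ k ∈ Finset.range N, A k) Filter.atTop
        (nhds (W0 - h 0)) := by
      simp only [hps]
      exact hh.sub tendsto_const_nhds
    have htsum2 : ∑' k, A k = W0 - h 0 :=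
      tendsto_nhds_unique hsummA.hasSum.tendsto_sum_nat hpslim
    rw [← htsum, htsum2, hW0]
    have hp0 : p 0 = x := by simp [hp]
    have hh0 : h 0 = -(wronk βinv s0 y0 z x) := by
      rw [hhdef]
      simp only [hp0]
      unfold wronk
      ring
    rw [hh0, hz]
    ring

/-- Separated boundary conditions kill the Wronskian with the conjugate. -/
lemma wronk_zero (βinv : ℝ → ℝ) (s0 : ℝ) (y : ℝ → ℂ) (c1 c2 : ℝ)
    (h12 : ¬(c1 = 0 ∧ c2 = 0)) (t : ℝ)
    (hbc : (c1 : ℂ) * y t + (c2 : ℂ) * Dq βinv s0 y t = 0) :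
    wronk βinv s0 y (fun u => conj (y u)) t = 0 := by
  have hconjD : Dq βinv s0 (fun u => conj (y u)) t = conj (Dq βinv s0 y t) :=
    Dq_conj βinv s0 y t
  set u := y t with hu
  set v := Dq βinv s0 y t with hv
  have hbc' : (c1 : ℂ) * conj u + (c2 : ℂ) * conj v = 0 := by
    have := congrArg (starRingEnd ℂ) hbc
    simpa [map_add, map_mul, Complex.conj_ofReal] using this
  unfold wronk
  rw [hconjD, ← hu, ← hv]
  have key : u * conj v - conj u * v = 0 := by
    rcases not_and_or.mp h12 with hc | hc
    · have hc' : (c1 : ℂ) ≠ 0 := by exact_mod_cast hc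
      have key1 : (c1 : ℂ) * (u * conj v - conj u * v) = 0 := by
        linear_combination conj v * hbc - v * hbc'
      rcases mul_eq_zero.mp key1 with h | h
      · exact absurd h hc'
      · exact h
    · have hc' : (c2 : ℂ) ≠ 0 := by exact_mod_cast hc
      have key2 : (c2 : ℂ) * (u * conj v - conj u * v) = 0 := by
        linear_combination u * hbc' - conj u * hbc
      rcases mul_eq_zero.mp key2 with h | h
      · exact absurd h hc'
      · exact h
  linear_combination key

end Aux

theorem stmt_12
    (I : Set ℝ) (hIconn : I.OrdConnected)
    (β βinv : ℝ → ℝ) (s0 : ℝ)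
    (hmono : StrictMonoOn β I) (hcont : ContinuousOn β I)
    (hbij : Set.BijOn β I I) (hinv : Set.InvOn βinv β I I)
    (hs0I : s0 ∈ I) (hfix : β s0 = s0)
    (hsign : ∀ t ∈ I, (t - s0) * (β t - t) ≤ 0)
    (huniq : ∀ t ∈ I, (t - s0) * (β t - t) = 0 → t = s0)
    (a b : ℝ) (ha : a ∈ I) (hb : b ∈ I) (has0 : a ≤ s0) (hs0b : s0 ≤ b)
    (r : ℝ → ℝ) (hr : ContinuousOn r (Set.Icc a b))
    (a1 a2 b1 b2 : ℝ) (ha12 : |a1| + |a2| ≠ 0) (hb12 : |b1| + |b2| ≠ 0)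
    (lam0 : ℂ) (y0 : ℝ → ℂ)
    (hy0L2a : Summable fun j : ℕ => (β^[j] a - β^[j + 1] a) * ‖y0 (β^[j] a)‖ ^ 2)
    (hy0L2b : Summable fun j : ℕ => (β^[j] b - β^[j + 1] b) * ‖y0 (β^[j] b)‖ ^ 2)
    (hy0c : ContinuousAt y0 s0) (hy0d : DifferentiableAt ℝ y0 s0)
    (hDy0d : DifferentiableAt ℝ (Dq β s0 y0) s0)
    (hDy0b : ∃ C, ∀ t ∈ insert s0 (Set.range (fun j : ℕ => β^[j] a) ∪ Set.range (fun j : ℕ => β^[j] b)), ‖Dq β s0 y0 t‖ ≤ C)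
    (hDDy0b : ∃ C, ∀ t ∈ insert s0 (Set.range (fun j : ℕ => β^[j] a) ∪ Set.range (fun j : ℕ => β^[j] b)), ‖Dq βinv s0 (Dq β s0 y0) t‖ ≤ C)
    (hy0eig : ∀ t ∈ insert s0 (Set.range (fun j : ℕ => β^[j] a) ∪ Set.range (fun j : ℕ => β^[j] b)), ellBeta β βinv s0 r y0 t = lam0 * y0 t)
    (hy0bc1 : (a1 : ℂ) * y0 a + (a2 : ℂ) * Dq βinv s0 y0 a = 0)
    (hy0bc2 : (b1 : ℂ) * y0 b + (b2 : ℂ) * Dq βinv s0 y0 b = 0)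
    (hy0pos : 0 < betaIntRAB β a b fun t => ‖y0 t‖ ^ 2) :
    lam0.im = 0 := by
    classical
  have heiga : ∀ k : ℕ, ellBeta β βinv s0 r y0 (β^[k] a) = lam0 * y0 (β^[k] a) := fun k =>
    hy0eig _ (Set.mem_insert_iff.mpr (Or.inr (Set.mem_union_left _ ⟨k, rfl⟩)))
  have heigb : ∀ k : ℕ, ellBeta β βinv s0 r y0 (β^[k] b) = lam0 * y0 (β^[k] b) := fun k =>
    hy0eig _ (Set.mem_insert_iff.mpr (Or.inr (Set.mem_union_right _ ⟨k, rfl⟩)))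
  have hga := green_endpoint I hIconn β βinv s0 hmono hcont hbij hinv hs0I hfix hsign huniq
    r lam0 y0 a ha hy0L2a hy0c hDy0d heiga
  have hgb := green_endpoint I hIconn β βinv s0 hmono hcont hbij hinv hs0I hfix hsign huniq
    r lam0 y0 b hb hy0L2b hy0c hDy0d heigb
  have ha12' : ¬(a1 = 0 ∧ a2 = 0) := by
    rintro ⟨h1, h2⟩
    simp [h1, h2] at ha12
  have hb12' : ¬(b1 = 0 ∧ b2 = 0) := by
    rintro ⟨h1, h2⟩
    simp [h1, h2] at hb12
  have hwa : wronk βinv s0 y0 (fun u => conj (y0 u)) a = 0 :=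
    wronk_zero βinv s0 y0 a1 a2 ha12' a hy0bc1
  have hwb : wronk βinv s0 y0 (fun u => conj (y0 u)) b = 0 :=
    wronk_zero βinv s0 y0 b1 b2 hb12' b hy0bc2
  have hmain : (lam0 - conj lam0) * ((betaIntRAB β a b fun t => ‖y0 t‖ ^ 2 : ℝ) : ℂ) = 0 := by
    unfold betaIntRAB
    push_cast
    rw [mul_sub, hgb, hga, hwa, hwb]
    ring
  have hne : ((betaIntRAB β a b fun t => ‖y0 t‖ ^ 2 : ℝ) : ℂ) ≠ 0 := by
    exact_mod_cast ne_of_gt hy0pos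
  have h0 : lam0 - conj lam0 = 0 := by
    rcases mul_eq_zero.mp hmain with h | h
    · exact h
    · exact absurd h hne
  have hsc := Complex.sub_conj lam0
  rw [h0] at hsc
  have him : (2 * lam0.im : ℝ) = 0 := by
    simpa using congrArg Complex.im hsc.symm
  linarith
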